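/- Let σ, μ ∈ P₂(ℝ^d) and let π ∈ Π_o(σ,μ) be an optimal transport plan for the quadratic cost. Then the barycentric projection map T_π(s) := ∫ x dπ_s(x) (with (π_s) the disintegration of π over σ) is an optimal transport map from σ to μ̃ := (T_π)_#σ, i.e., the plan (id, T_π)_#σ is an optimal plan in Π_o(σ, μ̃). -/

import Mathlib

open MeasureTheory
open scoped ENNReal

noncomputable section

variable {d : ℕ}

def IsCoupling (π : Measure (EuclideanSpace ℝ (Fin d) × EuclideanSpace ℝ (Fin d)))
    (σ μ : Measure (EuclideanSpace ℝ (Fin d))) : Prop :=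
  π.map Prod.fst = σ ∧ π.map Prod.snd = μ

/-- Quadratic transport cost of a plan. -/
def qCost (π : Measure (EuclideanSpace ℝ (Fin d) × EuclideanSpace ℝ (Fin d))) : ℝ≥0∞ :=
  ∫⁻ p, ENNReal.ofReal (‖p.1 - p.2‖ ^ 2) ∂π

def IsOptimalPlan (π : Measure (EuclideanSpace ℝ (Fin d) × EuclideanSpace ℝ (Fin d)))
    (σ μ : Measure (EuclideanSpace ℝ (Fin d))) : Prop :=
  IsCoupling π σ μ ∧ ∀ π', IsCoupling π' σ μ → qCost π ≤ qCost π'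

def IsDisintegration (π : Measure (EuclideanSpace ℝ (Fin d) × EuclideanSpace ℝ (Fin d)))
    (σ : Measure (EuclideanSpace ℝ (Fin d)))
    (κ : EuclideanSpace ℝ (Fin d) → Measure (EuclideanSpace ℝ (Fin d))) : Prop :=
  (∀ s, IsProbabilityMeasure (κ s)) ∧
  ∀ f : EuclideanSpace ℝ (Fin d) × EuclideanSpace ℝ (Fin d) → ℝ≥0∞, Measurable f →
    ∫⁻ p, f p ∂π = ∫⁻ s, ∫⁻ x, f (s, x) ∂(κ s) ∂σ

def secondMoment (μ : Measure (EuclideanSpace ℝ (Fin d))) : ℝ≥0∞ :=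
  ∫⁻ x, ENNReal.ofReal (‖x‖ ^ 2) ∂μ

open ProbabilityTheory
open scoped RealInnerProductSpace

namespace OTBary

variable {d : ℕ}

local notation "Ed" => EuclideanSpace ℝ (Fin d)

lemma integrable_of_lint {α : Type*} [MeasurableSpace α] {ρ : Measure α} {f : α → ℝ}
    (hm : AEStronglyMeasurable f ρ) (h : ∫⁻ a, ENNReal.ofReal |f a| ∂ρ ≠ ∞) :
    Integrable f ρ := by
  refine ⟨hm, ?_⟩
  rw [hasFiniteIntegral_iff_norm]
  simpa [Real.norm_eq_abs] using h.lt_top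

lemma lint_abs_inner_le {α : Type*} [MeasurableSpace α] (ρ : Measure α) {u v : α → Ed}
    (hu : Measurable u) (hv : Measurable v) :
    ∫⁻ a, ENNReal.ofReal |⟪u a, v a⟫| ∂ρ
      ≤ ∫⁻ a, ENNReal.ofReal (‖u a‖^2) ∂ρ + ∫⁻ a, ENNReal.ofReal (‖v a‖^2) ∂ρ := by
  rw [← lintegral_add_left (hu.norm.pow_const 2).ennreal_ofReal]
  refine lintegral_mono fun a => ?_
  rw [← ENNReal.ofReal_add (by positivity) (by positivity)]
  refine ENNReal.ofReal_le_ofReal ?_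
  have h1 : |⟪u a, v a⟫| ≤ ‖u a‖ * ‖v a‖ := abs_real_inner_le_norm _ _
  nlinarith [norm_nonneg (u a), norm_nonneg (v a), sq_nonneg (‖u a‖ - ‖v a‖)]

lemma integrable_inner_of_sq {α : Type*} [MeasurableSpace α] {ρ : Measure α} {u v : α → Ed}
    (hu : Measurable u) (hv : Measurable v)
    (h1 : ∫⁻ a, ENNReal.ofReal (‖u a‖^2) ∂ρ ≠ ∞) (h2 : ∫⁻ a, ENNReal.ofReal (‖v a‖^2) ∂ρ ≠ ∞) :
    Integrable (fun a => ⟪u a, v a⟫) ρ := by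
  refine integrable_of_lint (hu.inner hv).aestronglyMeasurable ?_
  exact ne_top_of_le_ne_top (ENNReal.add_ne_top.mpr ⟨h1, h2⟩) (lint_abs_inner_le ρ hu hv)

lemma integrable_norm_mul_of_sq {α : Type*} [MeasurableSpace α] {ρ : Measure α} {u v : α → Ed}
    (hu : Measurable u) (hv : Measurable v)
    (h1 : ∫⁻ a, ENNReal.ofReal (‖u a‖^2) ∂ρ ≠ ∞) (h2 : ∫⁻ a, ENNReal.ofReal (‖v a‖^2) ∂ρ ≠ ∞) :
    Integrable (fun a => ‖u a‖ * ‖v a‖) ρ := by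
  refine integrable_of_lint (hu.norm.mul hv.norm).aestronglyMeasurable ?_
  refine ne_top_of_le_ne_top (ENNReal.add_ne_top.mpr ⟨h1, h2⟩) ?_
  calc ∫⁻ a, ENNReal.ofReal |‖u a‖ * ‖v a‖| ∂ρ
      ≤ ∫⁻ a, (ENNReal.ofReal (‖u a‖^2) + ENNReal.ofReal (‖v a‖^2)) ∂ρ := by
        refine lintegral_mono fun a => ?_
        rw [← ENNReal.ofReal_add (by positivity) (by positivity)]
        refine ENNReal.ofReal_le_ofReal ?_
        rw [abs_of_nonneg (by positivity)]
        nlinarith [sq_nonneg (‖u a‖ - ‖v a‖)]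
    _ = _ := lintegral_add_left (hu.norm.pow_const 2).ennreal_ofReal _

lemma integrable_sq_of_lint {α : Type*} [MeasurableSpace α] {ρ : Measure α} {u : α → Ed}
    (hu : Measurable u) (h1 : ∫⁻ a, ENNReal.ofReal (‖u a‖^2) ∂ρ ≠ ∞) :
    Integrable (fun a => ‖u a‖^2) ρ := by
  refine integrable_of_lint ((hu.norm.pow_const 2)).aestronglyMeasurable ?_
  have he : (fun a => ENNReal.ofReal |‖u a‖^2|) = fun a => ENNReal.ofReal (‖u a‖^2) :=
    funext fun a => by rw [abs_of_nonneg (by positivity)]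
  rw [he]; exact h1

lemma l1_of_l2 {m : Measure Ed} [IsProbabilityMeasure m]
    (h : ∫⁻ x, ENNReal.ofReal (‖x‖^2) ∂m ≠ ∞) : Integrable (fun x : Ed => x) m := by
  have hsq : Integrable (fun x : Ed => ‖x‖^2) m := integrable_sq_of_lint measurable_id h
  refine Integrable.mono' ((integrable_const 1).add hsq) aestronglyMeasurable_id ?_
  refine Filter.Eventually.of_forall fun x => ?_
  show ‖x‖ ≤ 1 + ‖x‖^2
  have h0 : (0:ℝ) ≤ ‖x‖ := norm_nonneg x
  nlinarith [sq_nonneg (‖x‖ - 1)]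

lemma jensen_sq {m : Measure Ed} [IsProbabilityMeasure m] :
    ENNReal.ofReal (‖∫ x, x ∂m‖^2) ≤ ∫⁻ x, ENNReal.ofReal (‖x‖^2) ∂m := by
  rcases eq_or_ne (∫⁻ x, ENNReal.ofReal (‖x‖^2) ∂m) ∞ with h | h
  · rw [h]; exact le_top
  have hsq : Integrable (fun x : Ed => ‖x‖^2) m := integrable_sq_of_lint measurable_id h
  have hInt : Integrable (fun x : Ed => x) m := l1_of_l2 h
  have hN : Integrable (fun x : Ed => ‖x‖) m := hInt.norm
  set c := ∫ x, ‖x‖ ∂m with hc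
  have hc0 : 0 ≤ c := integral_nonneg fun x => norm_nonneg x
  have h1 : ‖∫ x, x ∂m‖ ≤ c := norm_integral_le_integral_norm _
  have h2 : c^2 ≤ ∫ x, ‖x‖^2 ∂m := by
    have h0 : 0 ≤ ∫ x, (‖x‖ - c)^2 ∂m := integral_nonneg fun x => sq_nonneg _
    have he : ∫ x, (‖x‖ - c)^2 ∂m = (∫ x, ‖x‖^2 ∂m) - 2*c*c + c^2 := by
      have h1' : ∀ x : Ed, (‖x‖ - c)^2 = (‖x‖^2 - (2*c)*‖x‖) + c^2 := fun x => by ring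
      simp_rw [h1']
      rw [integral_add (f := fun x : Ed => ‖x‖^2 - (2*c)*‖x‖)
        (hsq.sub (hN.const_mul (2*c))) (integrable_const _),
        integral_sub hsq (hN.const_mul (2*c)), integral_const_mul, integral_const]
      simp [← hc]
    nlinarith
  calc ENNReal.ofReal (‖∫ x, x ∂m‖^2) ≤ ENNReal.ofReal (∫ x, ‖x‖^2 ∂m) := by
        refine ENNReal.ofReal_le_ofReal ?_
        nlinarith [norm_nonneg (∫ x, x ∂m)]
    _ = _ := ofReal_integral_eq_lintegral_ofReal hsq
        (Filter.Eventually.of_forall fun x => sq_nonneg _)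

lemma pointwise_key {m : Measure Ed} [IsProbabilityMeasure m] (c : Ed) :
    ∫⁻ x, ENNReal.ofReal (⟪c, x⟫ + ‖c‖ * ‖x‖) ∂m + ENNReal.ofReal (-⟪c, ∫ x, x ∂m⟫)
      ≤ ∫⁻ x, ENNReal.ofReal (‖c‖ * ‖x‖) ∂m + ENNReal.ofReal ⟪c, ∫ x, x ∂m⟫ := by
  by_cases hInt : Integrable (fun x : Ed => x) m
  · set t := ∫ x, x ∂m with ht
    have hN : Integrable (fun x : Ed => ‖x‖) m := hInt.norm
    have hI : Integrable (fun x : Ed => ⟪c, x⟫) m := hInt.const_inner c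
    have hCN : Integrable (fun x : Ed => ‖c‖ * ‖x‖) m := hN.const_mul _
    have hA : Integrable (fun x : Ed => ⟪c, x⟫ + ‖c‖ * ‖x‖) m := hI.add hCN
    have hA0 : 0 ≤ᵐ[m] fun x : Ed => ⟪c, x⟫ + ‖c‖ * ‖x‖ :=
      Filter.Eventually.of_forall fun x => by
        show (0:ℝ) ≤ ⟪c, x⟫ + ‖c‖ * ‖x‖
        have h1 := abs_real_inner_le_norm c x
        have h2 := neg_abs_le ⟪c, x⟫
        linarith
    set N := ∫ x, ‖x‖ ∂m with hNdef
    have hNn : 0 ≤ N := integral_nonneg fun x => norm_nonneg x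
    have e1 : ∫⁻ x, ENNReal.ofReal (⟪c, x⟫ + ‖c‖ * ‖x‖) ∂m
        = ENNReal.ofReal (⟪c, t⟫ + ‖c‖ * N) := by
      rw [← ofReal_integral_eq_lintegral_ofReal hA hA0, integral_add hI hCN,
        integral_inner hInt, integral_const_mul, ← ht, ← hNdef]
    have e2 : ∫⁻ x, ENNReal.ofReal (‖c‖ * ‖x‖) ∂m = ENNReal.ofReal (‖c‖ * N) := by
      rw [← ofReal_integral_eq_lintegral_ofReal hCN (Filter.Eventually.of_forall fun x => by
        positivity), integral_const_mul, ← hNdef]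
    have huv : |⟪c, t⟫| ≤ ‖c‖ * N :=
      le_trans (abs_real_inner_le_norm c t)
        (mul_le_mul_of_nonneg_left (norm_integral_le_integral_norm _) (norm_nonneg c))
    rw [e1, e2]
    rcases le_or_gt 0 ⟪c, t⟫ with hu | hu
    · rw [show ENNReal.ofReal (-⟪c, t⟫) = 0 from ENNReal.ofReal_of_nonpos (by linarith),
        add_zero, ENNReal.ofReal_add hu (by positivity), add_comm]
    · have h1 : 0 ≤ ⟪c, t⟫ + ‖c‖ * N := by
        have := neg_abs_le ⟪c, t⟫; linarith
      rw [show ENNReal.ofReal ⟪c, t⟫ = 0 from ENNReal.ofReal_of_nonpos (le_of_lt hu),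
        add_zero, ← ENNReal.ofReal_add h1 (by linarith)]
      refine le_of_eq (congrArg ENNReal.ofReal ?_)
      ring
  · have ht : (∫ x, x ∂m) = 0 := integral_undef hInt
    rcases eq_or_ne c 0 with rfl | hc
    · simp
    · have hn : ∫⁻ x, ENNReal.ofReal ‖x‖ ∂m = ∞ := by
        by_contra h
        have hfin : HasFiniteIntegral (fun x : Ed => x) m := by
          rw [hasFiniteIntegral_iff_norm]
          exact lt_top_iff_ne_top.mpr h
        exact hInt ⟨aestronglyMeasurable_id, hfin⟩
      have hRT : ∫⁻ x, ENNReal.ofReal (‖c‖ * ‖x‖) ∂m = ∞ := by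
        rw [show (fun x : Ed => ENNReal.ofReal (‖c‖ * ‖x‖))
            = fun x => ENNReal.ofReal ‖c‖ * ENNReal.ofReal ‖x‖ from
          funext fun x => ENNReal.ofReal_mul (norm_nonneg c),
          lintegral_const_mul _ measurable_norm.ennreal_ofReal, hn, ENNReal.mul_top]
        exact (ENNReal.ofReal_pos.mpr (norm_pos_iff.mpr hc)).ne'
      rw [hRT, top_add]
      exact le_top

lemma key_identity {σ : Measure Ed} [IsProbabilityMeasure σ] {π : Measure (Ed × Ed)}
    {κ : Ed → Measure Ed} (hκ : IsDisintegration π σ κ)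
    {T : Ed → Ed} (hTm : Measurable T) (hT : ∀ s, T s = ∫ x, x ∂(κ s))
    {v : Ed → Ed} (hvm : Measurable v)
    (hv2 : ∫⁻ s, ENNReal.ofReal (‖v s‖^2) ∂σ ≠ ∞)
    (hT2 : ∫⁻ s, ENNReal.ofReal (‖T s‖^2) ∂σ ≠ ∞)
    (hm2 : ∫⁻ p : Ed × Ed, ENNReal.ofReal (‖p.2‖^2) ∂π ≠ ∞)
    (hfst : π.map Prod.fst = σ) :
    ∫ p : Ed × Ed, ⟪v p.1, p.2⟫ ∂π = ∫ s, ⟪v s, T s⟫ ∂σ := by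
  obtain ⟨hκp, hκd⟩ := hκ
  -- measurability facts
  have hv2m : Measurable fun s => ENNReal.ofReal (‖v s‖^2) := (hvm.norm.pow_const 2).ennreal_ofReal
  have hv2π : ∫⁻ p : Ed × Ed, ENNReal.ofReal (‖v p.1‖^2) ∂π ≠ ∞ := by
    rw [← hfst] at hv2
    rwa [lintegral_map hv2m measurable_fst] at hv2
  -- integrability over π
  have hIi : Integrable (fun p : Ed × Ed => ⟪v p.1, p.2⟫) π :=
    integrable_inner_of_sq (hvm.comp measurable_fst) measurable_snd hv2π hm2
  have hBi : Integrable (fun p : Ed × Ed => ‖v p.1‖ * ‖p.2‖) π :=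
    integrable_norm_mul_of_sq (hvm.comp measurable_fst) measurable_snd hv2π hm2
  have hAi : Integrable (fun p : Ed × Ed => ⟪v p.1, p.2⟫ + ‖v p.1‖ * ‖p.2‖) π := hIi.add hBi
  have hA'i : Integrable (fun p : Ed × Ed => -⟪v p.1, p.2⟫ + ‖v p.1‖ * ‖p.2‖) π := hIi.neg.add hBi
  -- g
  set g : Ed → ℝ := fun s => ⟪v s, T s⟫ with hgdef
  have hgm : Measurable g := hvm.inner hTm
  have hgi : Integrable g σ := integrable_inner_of_sq hvm hTm hv2 hT2
  set Gp := ∫⁻ s, ENNReal.ofReal (g s) ∂σ with hGpdef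
  set Gm := ∫⁻ s, ENNReal.ofReal (-(g s)) ∂σ with hGmdef
  have habs : ∫⁻ s, ENNReal.ofReal |g s| ∂σ ≠ ∞ := by
    have := hgi.hasFiniteIntegral
    rw [hasFiniteIntegral_iff_norm] at this
    simpa [Real.norm_eq_abs] using this.ne
  have hGp : Gp ≠ ∞ := ne_top_of_le_ne_top habs
    (lintegral_mono fun s => ENNReal.ofReal_le_ofReal (le_abs_self _))
  have hGm : Gm ≠ ∞ := ne_top_of_le_ne_top habs
    (lintegral_mono fun s => ENNReal.ofReal_le_ofReal (by rw [abs_eq_max_neg]; exact le_max_right _ _))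
  -- nonnegative integrands over π
  have hA0 : 0 ≤ᵐ[π] fun p : Ed × Ed => ⟪v p.1, p.2⟫ + ‖v p.1‖ * ‖p.2‖ :=
    Filter.Eventually.of_forall fun p => by
      show (0:ℝ) ≤ ⟪v p.1, p.2⟫ + ‖v p.1‖ * ‖p.2‖
      have h1 := abs_real_inner_le_norm (v p.1) p.2
      have h2 := neg_abs_le ⟪v p.1, p.2⟫
      linarith
  have hA'0 : 0 ≤ᵐ[π] fun p : Ed × Ed => -⟪v p.1, p.2⟫ + ‖v p.1‖ * ‖p.2‖ :=
    Filter.Eventually.of_forall fun p => by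
      show (0:ℝ) ≤ -⟪v p.1, p.2⟫ + ‖v p.1‖ * ‖p.2‖
      have h1 := abs_real_inner_le_norm (v p.1) p.2
      have h2 := le_abs_self ⟪v p.1, p.2⟫
      linarith
  have hB0 : 0 ≤ᵐ[π] fun p : Ed × Ed => ‖v p.1‖ * ‖p.2‖ :=
    Filter.Eventually.of_forall fun p => by positivity
  -- π side values
  set I := ∫ p : Ed × Ed, ⟪v p.1, p.2⟫ ∂π with hIdef
  set W := ∫ p : Ed × Ed, ‖v p.1‖ * ‖p.2‖ ∂π with hWdef
  have hW0 : 0 ≤ W := integral_nonneg fun p => by positivity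
  have hAI : ∫ p : Ed × Ed, (⟪v p.1, p.2⟫ + ‖v p.1‖ * ‖p.2‖) ∂π = I + W := integral_add hIi hBi
  have hA'I : ∫ p : Ed × Ed, (-⟪v p.1, p.2⟫ + ‖v p.1‖ * ‖p.2‖) ∂π = -I + W := by
    rw [integral_add (f := fun p : Ed × Ed => -⟪v p.1, p.2⟫) hIi.neg hBi, integral_neg]
  have hIW0 : 0 ≤ I + W := hAI ▸ integral_nonneg_of_ae hA0
  have hI'W0 : 0 ≤ -I + W := hA'I ▸ integral_nonneg_of_ae hA'0
  have eA : ∫⁻ p : Ed × Ed, ENNReal.ofReal (⟪v p.1, p.2⟫ + ‖v p.1‖ * ‖p.2‖) ∂π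
      = ENNReal.ofReal (I + W) := by
    rw [← ofReal_integral_eq_lintegral_ofReal hAi hA0, hAI]
  have eA' : ∫⁻ p : Ed × Ed, ENNReal.ofReal (-⟪v p.1, p.2⟫ + ‖v p.1‖ * ‖p.2‖) ∂π
      = ENNReal.ofReal (-I + W) := by
    rw [← ofReal_integral_eq_lintegral_ofReal hA'i hA'0, hA'I]
  have eB : ∫⁻ p : Ed × Ed, ENNReal.ofReal (‖v p.1‖ * ‖p.2‖) ∂π = ENNReal.ofReal W := by
    rw [← ofReal_integral_eq_lintegral_ofReal hBi hB0, hWdef]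
  -- measurable integrands for disintegration
  have hmA : Measurable fun p : Ed × Ed => ENNReal.ofReal (⟪v p.1, p.2⟫ + ‖v p.1‖ * ‖p.2‖) :=
    (((hvm.comp measurable_fst).inner measurable_snd).add
      (((hvm.comp measurable_fst).norm).mul measurable_snd.norm)).ennreal_ofReal
  have hmA' : Measurable fun p : Ed × Ed => ENNReal.ofReal (-⟪v p.1, p.2⟫ + ‖v p.1‖ * ‖p.2‖) :=
    ((((hvm.comp measurable_fst).inner measurable_snd).neg).add
      (((hvm.comp measurable_fst).norm).mul measurable_snd.norm)).ennreal_ofReal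
  have hmB : Measurable fun p : Ed × Ed => ENNReal.ofReal (‖v p.1‖ * ‖p.2‖) :=
    (((hvm.comp measurable_fst).norm).mul measurable_snd.norm).ennreal_ofReal
  -- disintegration
  have dA := hκd _ hmA
  have dA' := hκd _ hmA'
  have dB := hκd _ hmB
  -- pointwise inequalities
  have point1 : ∀ s, (∫⁻ x, ENNReal.ofReal (⟪v s, x⟫ + ‖v s‖ * ‖x‖) ∂(κ s))
      + ENNReal.ofReal (-(g s))
      ≤ (∫⁻ x, ENNReal.ofReal (‖v s‖ * ‖x‖) ∂(κ s)) + ENNReal.ofReal (g s) := fun s => by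
    haveI := hκp s
    have := pointwise_key (m := κ s) (v s)
    rw [← hT s] at this
    exact this
  have point2 : ∀ s, (∫⁻ x, ENNReal.ofReal (-⟪v s, x⟫ + ‖v s‖ * ‖x‖) ∂(κ s))
      + ENNReal.ofReal (g s)
      ≤ (∫⁻ x, ENNReal.ofReal (‖v s‖ * ‖x‖) ∂(κ s)) + ENNReal.ofReal (-(g s)) := fun s => by
    haveI := hκp s
    have := pointwise_key (m := κ s) (-(v s))
    rw [← hT s] at this
    simpa [inner_neg_left] using this
  -- integrate the pointwise inequalities
  have mono1 : ∫⁻ s, ((∫⁻ x, ENNReal.ofReal (⟪v s, x⟫ + ‖v s‖ * ‖x‖) ∂(κ s))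
        + ENNReal.ofReal (-(g s))) ∂σ
      ≤ ∫⁻ s, ((∫⁻ x, ENNReal.ofReal (‖v s‖ * ‖x‖) ∂(κ s)) + ENNReal.ofReal (g s)) ∂σ :=
    lintegral_mono point1
  have mono2 : ∫⁻ s, ((∫⁻ x, ENNReal.ofReal (-⟪v s, x⟫ + ‖v s‖ * ‖x‖) ∂(κ s))
        + ENNReal.ofReal (g s)) ∂σ
      ≤ ∫⁻ s, ((∫⁻ x, ENNReal.ofReal (‖v s‖ * ‖x‖) ∂(κ s)) + ENNReal.ofReal (-(g s))) ∂σ :=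
    lintegral_mono point2
  rw [lintegral_add_right _ (show Measurable fun s => ENNReal.ofReal (-(g s)) from hgm.neg.ennreal_ofReal), lintegral_add_right _ hgm.ennreal_ofReal,
    ← dA, ← dB, eA, eB] at mono1
  rw [lintegral_add_right _ hgm.ennreal_ofReal, lintegral_add_right _ (show Measurable fun s => ENNReal.ofReal (-(g s)) from hgm.neg.ennreal_ofReal),
    ← dA', ← dB, eA', eB] at mono2
  -- pass to real numbers
  have r1 : (I + W) + Gm.toReal ≤ W + Gp.toReal := by
    have hfin : ENNReal.ofReal W + Gp ≠ ∞ := ENNReal.add_ne_top.mpr ⟨ENNReal.ofReal_ne_top, hGp⟩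
    have := ENNReal.toReal_mono hfin mono1
    rwa [ENNReal.toReal_add ENNReal.ofReal_ne_top hGm,
      ENNReal.toReal_add ENNReal.ofReal_ne_top hGp,
      ENNReal.toReal_ofReal hIW0, ENNReal.toReal_ofReal hW0] at this
  have r2 : (-I + W) + Gp.toReal ≤ W + Gm.toReal := by
    have hfin : ENNReal.ofReal W + Gm ≠ ∞ := ENNReal.add_ne_top.mpr ⟨ENNReal.ofReal_ne_top, hGm⟩
    have := ENNReal.toReal_mono hfin mono2
    rwa [ENNReal.toReal_add ENNReal.ofReal_ne_top hGp,
      ENNReal.toReal_add ENNReal.ofReal_ne_top hGm,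
      ENNReal.toReal_ofReal hI'W0, ENNReal.toReal_ofReal hW0] at this
  have hgval : ∫ s, g s ∂σ = Gp.toReal - Gm.toReal :=
    integral_eq_lintegral_pos_part_sub_lintegral_neg_part hgi
  have : I = ∫ s, g s ∂σ := by rw [hgval]; linarith
  exact this

lemma lint_fst_eq {ρ : Measure (Ed × Ed)} {a : Measure Ed} (h : ρ.map Prod.fst = a) :
    ∫⁻ p : Ed × Ed, ENNReal.ofReal (‖p.1‖^2) ∂ρ = secondMoment a := by
  rw [secondMoment, ← h,
    lintegral_map (measurable_norm.pow_const 2).ennreal_ofReal measurable_fst]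

lemma lint_snd_eq {ρ : Measure (Ed × Ed)} {b : Measure Ed} (h : ρ.map Prod.snd = b) :
    ∫⁻ p : Ed × Ed, ENNReal.ofReal (‖p.2‖^2) ∂ρ = secondMoment b := by
  rw [secondMoment, ← h,
    lintegral_map (measurable_norm.pow_const 2).ennreal_ofReal measurable_snd]

lemma prob_of_fst {ρ : Measure (Ed × Ed)} {a : Measure Ed} [IsProbabilityMeasure a]
    (h : ρ.map Prod.fst = a) : IsProbabilityMeasure ρ := by
  constructor
  have h2 : ρ Set.univ = a Set.univ := by
    rw [← h, Measure.map_apply measurable_fst MeasurableSet.univ, Set.preimage_univ]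
  exact h2.trans measure_univ

lemma qCost_repr {ρ : Measure (Ed × Ed)} [IsProbabilityMeasure ρ]
    (h1 : ∫⁻ p : Ed × Ed, ENNReal.ofReal (‖p.1‖^2) ∂ρ ≠ ∞)
    (h2 : ∫⁻ p : Ed × Ed, ENNReal.ofReal (‖p.2‖^2) ∂ρ ≠ ∞) :
    qCost ρ = ENNReal.ofReal (∫ p : Ed × Ed, ‖p.1 - p.2‖^2 ∂ρ)
    ∧ 0 ≤ ∫ p : Ed × Ed, ‖p.1 - p.2‖^2 ∂ρ
    ∧ ∫ p : Ed × Ed, ‖p.1 - p.2‖^2 ∂ρ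
      = (∫⁻ p : Ed × Ed, ENNReal.ofReal (‖p.1‖^2) ∂ρ).toReal
        + (∫⁻ p : Ed × Ed, ENNReal.ofReal (‖p.2‖^2) ∂ρ).toReal
        - 2 * ∫ p : Ed × Ed, ⟪p.1, p.2⟫ ∂ρ := by
  have hsq1 : Integrable (fun p : Ed × Ed => ‖p.1‖^2) ρ :=
    integrable_sq_of_lint measurable_fst h1
  have hsq2 : Integrable (fun p : Ed × Ed => ‖p.2‖^2) ρ :=
    integrable_sq_of_lint measurable_snd h2
  have hIi : Integrable (fun p : Ed × Ed => ⟪p.1, p.2⟫) ρ :=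
    integrable_inner_of_sq measurable_fst measurable_snd h1 h2
  have hexp : ∀ p : Ed × Ed, ‖p.1 - p.2‖^2 = (‖p.1‖^2 - (2:ℝ)*⟪p.1, p.2⟫) + ‖p.2‖^2 :=
    fun p => by rw [norm_sub_sq_real]
  have hcost : Integrable (fun p : Ed × Ed => ‖p.1 - p.2‖^2) ρ := by
    have : (fun p : Ed × Ed => ‖p.1 - p.2‖^2)
        = fun p => (‖p.1‖^2 - (2:ℝ)*⟪p.1, p.2⟫) + ‖p.2‖^2 := funext hexp
    rw [this]
    exact (hsq1.sub (hIi.const_mul 2)).add hsq2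
  have e0 : qCost ρ = ENNReal.ofReal (∫ p : Ed × Ed, ‖p.1 - p.2‖^2 ∂ρ) :=
    (ofReal_integral_eq_lintegral_ofReal hcost
      (Filter.Eventually.of_forall fun p => sq_nonneg _)).symm
  have hnn : 0 ≤ ∫ p : Ed × Ed, ‖p.1 - p.2‖^2 ∂ρ := integral_nonneg fun p => sq_nonneg _
  refine ⟨e0, hnn, ?_⟩
  have es1 : ∫ p : Ed × Ed, ‖p.1‖^2 ∂ρ
      = (∫⁻ p : Ed × Ed, ENNReal.ofReal (‖p.1‖^2) ∂ρ).toReal :=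
    integral_eq_lintegral_of_nonneg_ae (Filter.Eventually.of_forall fun p => sq_nonneg _)
      (measurable_fst.norm.pow_const 2).aestronglyMeasurable
  have es2 : ∫ p : Ed × Ed, ‖p.2‖^2 ∂ρ
      = (∫⁻ p : Ed × Ed, ENNReal.ofReal (‖p.2‖^2) ∂ρ).toReal :=
    integral_eq_lintegral_of_nonneg_ae (Filter.Eventually.of_forall fun p => sq_nonneg _)
      (measurable_snd.norm.pow_const 2).aestronglyMeasurable
  calc ∫ p : Ed × Ed, ‖p.1 - p.2‖^2 ∂ρ
      = ∫ p : Ed × Ed, ((‖p.1‖^2 - (2:ℝ)*⟪p.1, p.2⟫) + ‖p.2‖^2) ∂ρ := by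
        exact integral_congr_ae (Filter.Eventually.of_forall fun p => hexp p)
    _ = (∫ p : Ed × Ed, ‖p.1‖^2 ∂ρ) + (∫ p : Ed × Ed, ‖p.2‖^2 ∂ρ)
          - 2 * ∫ p : Ed × Ed, ⟪p.1, p.2⟫ ∂ρ := by
        rw [integral_add (f := fun p : Ed × Ed => ‖p.1‖^2 - (2:ℝ)*⟪p.1, p.2⟫)
          (hsq1.sub (hIi.const_mul 2)) hsq2,
          integral_sub hsq1 (hIi.const_mul 2), integral_const_mul]
        ring
    _ = _ := by rw [es1, es2]

end OTBary

open OTBary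

local notation "Ed" => EuclideanSpace ℝ (Fin d)

theorem stmt_2 (σ μ : Measure (EuclideanSpace ℝ (Fin d)))
    [IsProbabilityMeasure σ] [IsProbabilityMeasure μ]
    (hσ2 : secondMoment σ < ∞) (hμ2 : secondMoment μ < ∞)
    (π : Measure (EuclideanSpace ℝ (Fin d) × EuclideanSpace ℝ (Fin d)))
    (hπ : IsOptimalPlan π σ μ)
    (κ : EuclideanSpace ℝ (Fin d) → Measure (EuclideanSpace ℝ (Fin d)))
    (hκ : IsDisintegration π σ κ)
    (T : EuclideanSpace ℝ (Fin d) → EuclideanSpace ℝ (Fin d)) (hTm : Measurable T)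
    (hT : ∀ s, T s = ∫ x, x ∂(κ s)) :
    IsOptimalPlan (σ.map (fun s => (s, T s))) σ (σ.map T) := by
  obtain ⟨⟨hπfst, hπsnd⟩, hπopt⟩ := hπ
  have hκp := hκ.1
  have hκd := hκ.2
  haveI hπprob : IsProbabilityMeasure π := prob_of_fst hπfst
  set ν : Measure Ed := σ.map T with hν
  haveI : IsProbabilityMeasure ν := Measure.isProbabilityMeasure_map hTm.aemeasurable
  have hσ2' : secondMoment σ ≠ ∞ := hσ2.ne
  have hμ2' : secondMoment μ ≠ ∞ := hμ2.ne
  have hπ1 : ∫⁻ p : Ed × Ed, ENNReal.ofReal (‖p.1‖^2) ∂π = secondMoment σ := lint_fst_eq hπfst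
  have hπ2 : ∫⁻ p : Ed × Ed, ENNReal.ofReal (‖p.2‖^2) ∂π = secondMoment μ := lint_snd_eq hπsnd
  have hκμ : ∫⁻ s, ∫⁻ x, ENNReal.ofReal (‖x‖^2) ∂(κ s) ∂σ = secondMoment μ := by
    rw [← hκd _ (measurable_snd.norm.pow_const 2).ennreal_ofReal]
    exact hπ2
  have hT2 : ∫⁻ s, ENNReal.ofReal (‖T s‖^2) ∂σ ≠ ∞ := by
    refine ne_top_of_le_ne_top (hκμ ▸ hμ2') (lintegral_mono fun s => ?_)
    haveI := hκp s
    rw [hT s]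
    exact jensen_sq
  have hν2' : secondMoment ν ≠ ∞ := by
    rw [hν, secondMoment, lintegral_map (measurable_norm.pow_const 2).ennreal_ofReal hTm]
    exact hT2
  -- the graph plan is a coupling
  have hgraphm : Measurable fun s : Ed => (s, T s) := measurable_id.prodMk hTm
  haveI : IsProbabilityMeasure (σ.map (fun s => (s, T s))) :=
    Measure.isProbabilityMeasure_map hgraphm.aemeasurable
  have hπgfst : (σ.map (fun s => (s, T s))).map Prod.fst = σ := by
    rw [Measure.map_map measurable_fst hgraphm]
    exact Measure.map_id
  have hπgsnd : (σ.map (fun s => (s, T s))).map Prod.snd = ν := by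
    rw [Measure.map_map measurable_snd hgraphm, hν]
    rfl
  refine ⟨⟨hπgfst, hπgsnd⟩, ?_⟩
  intro γ hγ
  obtain ⟨hγfst, hγsnd⟩ := hγ
  haveI : IsProbabilityMeasure γ := prob_of_fst hγfst
  -- Key identity 1 : the cost integrand of π
  have hkey1 : ∫ p : Ed × Ed, ⟪p.1, p.2⟫ ∂π = ∫ s, ⟪s, T s⟫ ∂σ := by
    have h := key_identity ⟨hκp, hκd⟩ hTm hT (v := fun s : Ed => s) measurable_id
      hσ2' hT2 (hπ2 ▸ hμ2') hπfst
    exact h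
  have hIg : ∫ p : Ed × Ed, ⟪p.1, p.2⟫ ∂(σ.map (fun s => (s, T s))) = ∫ s, ⟪s, T s⟫ ∂σ :=
    integral_map hgraphm.aemeasurable
      (measurable_fst.inner measurable_snd).aestronglyMeasurable
  -- glued competitor construction
  set γs := γ.map Prod.swap with hγsdef
  haveI : IsProbabilityMeasure γs := Measure.isProbabilityMeasure_map measurable_swap.aemeasurable
  have hγsfst : γs.fst = ν := by
    rw [hγsdef, Measure.fst, Measure.map_map measurable_fst measurable_swap]
    exact hγsnd
  have hγssnd : γs.snd = σ := by
    rw [hγsdef, Measure.snd, Measure.map_map measurable_snd measurable_swap]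
    exact hγfst
  set Kγ := γs.condKernel with hKγdef
  have hγs : ν ⊗ₘ Kγ = γs := by rw [← hγsfst]; exact γs.disintegrate _
  set lm := π.map (fun p : Ed × Ed => (T p.1, p.2)) with hlmdef
  have hlmm : Measurable fun p : Ed × Ed => (T p.1, p.2) :=
    (hTm.comp measurable_fst).prodMk measurable_snd
  haveI : IsProbabilityMeasure lm := Measure.isProbabilityMeasure_map hlmm.aemeasurable
  have hlmfst : lm.fst = ν := by
    rw [hlmdef, Measure.fst, Measure.map_map measurable_fst hlmm, hν, ← hπfst,
      Measure.map_map hTm measurable_fst]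
    rfl
  have hlmsnd : lm.snd = μ := by
    rw [hlmdef, Measure.snd, Measure.map_map measurable_snd hlmm]
    exact hπsnd
  set Kl := lm.condKernel with hKldef
  have hlm : ν ⊗ₘ Kl = lm := by rw [← hlmfst]; exact lm.disintegrate _
  -- second moments of γs and lm
  have hγs1 : ∫⁻ p : Ed × Ed, ENNReal.ofReal (‖p.1‖^2) ∂γs = secondMoment ν := by
    have h := lint_fst_eq (ρ := γs) (a := γs.fst) rfl
    rwa [hγsfst] at h
  have hγs2 : ∫⁻ p : Ed × Ed, ENNReal.ofReal (‖p.2‖^2) ∂γs = secondMoment σ := by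
    have h := lint_snd_eq (ρ := γs) (b := γs.snd) rfl
    rwa [hγssnd] at h
  have hlm1 : ∫⁻ p : Ed × Ed, ENNReal.ofReal (‖p.1‖^2) ∂lm = secondMoment ν := by
    have h := lint_fst_eq (ρ := lm) (a := lm.fst) rfl
    rwa [hlmfst] at h
  have hlm2 : ∫⁻ p : Ed × Ed, ENNReal.ofReal (‖p.2‖^2) ∂lm = secondMoment μ := by
    have h := lint_snd_eq (ρ := lm) (b := lm.snd) rfl
    rwa [hlmsnd] at h
  -- kernel moment facts
  have hKγmom : ∫⁻ y, ∫⁻ s, ENNReal.ofReal (‖s‖^2) ∂(Kγ y) ∂ν = secondMoment σ := by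
    rw [← Measure.lintegral_compProd (measurable_snd.norm.pow_const 2).ennreal_ofReal, hγs]
    exact hγs2
  have hKlmom : ∫⁻ y, ∫⁻ x, ENNReal.ofReal (‖x‖^2) ∂(Kl y) ∂ν = secondMoment μ := by
    rw [← Measure.lintegral_compProd (measurable_snd.norm.pow_const 2).ennreal_ofReal, hlm]
    exact hlm2
  have hKγ2 : ∀ᵐ y ∂ν, ∫⁻ s, ENNReal.ofReal (‖s‖^2) ∂(Kγ y) ≠ ∞ := by
    have hmeas : Measurable fun y => ∫⁻ s, ENNReal.ofReal (‖s‖^2) ∂(Kγ y) :=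
      Measurable.lintegral_kernel_prod_right' (κ := Kγ)
        (measurable_snd.norm.pow_const 2).ennreal_ofReal
    exact (ae_lt_top hmeas (hKγmom ▸ hσ2')).mono fun y hy => hy.ne
  have hKl2 : ∀ᵐ y ∂ν, ∫⁻ x, ENNReal.ofReal (‖x‖^2) ∂(Kl y) ≠ ∞ := by
    have hmeas : Measurable fun y => ∫⁻ x, ENNReal.ofReal (‖x‖^2) ∂(Kl y) :=
      Measurable.lintegral_kernel_prod_right' (κ := Kl)
        (measurable_snd.norm.pow_const 2).ennreal_ofReal
    exact (ae_lt_top hmeas (hKlmom ▸ hμ2')).mono fun y hy => hy.ne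
  have hKγint : ∀ᵐ y ∂ν, Integrable (fun s : Ed => s) (Kγ y) :=
    hKγ2.mono fun y hy => l1_of_l2 hy
  have hKlint : ∀ᵐ y ∂ν, Integrable (fun x : Ed => x) (Kl y) :=
    hKl2.mono fun y hy => l1_of_l2 hy
  -- the barycenter of Kγ
  set w : Ed → Ed := fun y => ∫ s, s ∂(Kγ y) with hwdef
  have hwm : Measurable w :=
    (measurable_snd.stronglyMeasurable.integral_kernel_prod_right' (κ := Kγ)).measurable
  have hw2 : ∫⁻ y, ENNReal.ofReal (‖w y‖^2) ∂ν ≠ ∞ := by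
    refine ne_top_of_le_ne_top (hKγmom ▸ hσ2') (lintegral_mono fun y => ?_)
    exact jensen_sq
  -- Key identity 2
  have hwT2 : ∫⁻ s, ENNReal.ofReal (‖w (T s)‖^2) ∂σ ≠ ∞ := by
    rw [← lintegral_map ((hwm.norm.pow_const 2).ennreal_ofReal) hTm, ← hν]
    exact hw2
  have hkey2 : ∫ p : Ed × Ed, ⟪w (T p.1), p.2⟫ ∂π = ∫ s, ⟪w (T s), T s⟫ ∂σ :=
    key_identity ⟨hκp, hκd⟩ hTm hT (v := fun s : Ed => w (T s)) (hwm.comp hTm)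
      hwT2 hT2 (hπ2 ▸ hμ2') hπfst
  have htrans1 : ∫ p : Ed × Ed, ⟪w p.1, p.2⟫ ∂lm = ∫ p : Ed × Ed, ⟪w (T p.1), p.2⟫ ∂π := by
    rw [hlmdef]
    exact integral_map hlmm.aemeasurable
      ((hwm.comp measurable_fst).inner measurable_snd).aestronglyMeasurable
  have htrans2 : ∫ y, ⟪w y, y⟫ ∂ν = ∫ s, ⟪w (T s), T s⟫ ∂σ := by
    rw [hν]
    exact integral_map hTm.aemeasurable (hwm.inner measurable_id).aestronglyMeasurable
  -- lm disintegration
  have hlmw2 : ∫⁻ p : Ed × Ed, ENNReal.ofReal (‖w p.1‖^2) ∂lm ≠ ∞ := by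
    have hmeasw : Measurable fun p : Ed × Ed => ENNReal.ofReal (‖w p.1‖^2) :=
      ((hwm.comp measurable_fst).norm.pow_const 2).ennreal_ofReal
    rw [← hlm, Measure.lintegral_compProd hmeasw]
    simp only [lintegral_const, measure_univ, mul_one]
    exact hw2
  have hIlm : Integrable (fun p : Ed × Ed => ⟪w p.1, p.2⟫) lm :=
    integrable_inner_of_sq (hwm.comp measurable_fst) measurable_snd hlmw2 (hlm2 ▸ hμ2')
  have hbl1 : ∫ p : Ed × Ed, ⟪w p.1, p.2⟫ ∂lm = ∫ y, ∫ x, ⟪w y, x⟫ ∂(Kl y) ∂ν := by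
    rw [← hlm] at hIlm ⊢
    exact Measure.integral_compProd hIlm
  have hbl2 : ∫ y, ∫ x, ⟪w y, x⟫ ∂(Kl y) ∂ν = ∫ y, ⟪w y, ∫ x, x ∂(Kl y)⟫ ∂ν :=
    integral_congr_ae (hKlint.mono fun y hy => integral_inner hy (w y))
  -- γs disintegration
  have hIγs : Integrable (fun p : Ed × Ed => ⟪p.2, p.1⟫) γs :=
    integrable_inner_of_sq measurable_snd measurable_fst (hγs2 ▸ hσ2') (hγs1 ▸ hν2')
  have hγtrans : ∫ p : Ed × Ed, ⟪p.1, p.2⟫ ∂γ = ∫ p : Ed × Ed, ⟪p.2, p.1⟫ ∂γs := by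
    rw [hγsdef]
    exact (integral_map measurable_swap.aemeasurable
      (measurable_snd.inner measurable_fst).aestronglyMeasurable).symm
  have hγrep : ∫ p : Ed × Ed, ⟪p.2, p.1⟫ ∂γs = ∫ y, ∫ s, ⟪s, y⟫ ∂(Kγ y) ∂ν := by
    rw [← hγs] at hIγs ⊢
    exact Measure.integral_compProd hIγs
  have hγrep2 : ∫ y, ∫ s, ⟪s, y⟫ ∂(Kγ y) ∂ν = ∫ y, ⟪w y, y⟫ ∂ν := by
    refine integral_congr_ae (hKγint.mono fun y hy => ?_)
    show ∫ s, ⟪s, y⟫ ∂(Kγ y) = ⟪w y, y⟫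
    have h1 : ∫ s, ⟪s, y⟫ ∂(Kγ y) = ∫ s, ⟪y, s⟫ ∂(Kγ y) := by simp_rw [real_inner_comm]
    rw [h1, integral_inner hy y, real_inner_comm]
  -- the glued plan
  set K : Kernel Ed (Ed × Ed) := Kγ ×ₖ Kl with hKdef
  set m2 := ν ⊗ₘ K with hm2def
  haveI : IsProbabilityMeasure m2 := by rw [hm2def]; infer_instance
  set πt := m2.map Prod.snd with hπtdef
  haveI : IsProbabilityMeasure πt := Measure.isProbabilityMeasure_map measurable_snd.aemeasurable
  have hπtfst : πt.map Prod.fst = σ := by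
    rw [hπtdef, Measure.map_map measurable_fst measurable_snd]
    ext A hA
    rw [Measure.map_apply (measurable_fst.comp measurable_snd) hA, hm2def,
      Measure.compProd_apply ((measurable_fst.comp measurable_snd) hA)]
    have hfib : ∀ y, K y (Prod.mk y ⁻¹' ((Prod.fst ∘ Prod.snd : Ed × (Ed × Ed) → Ed) ⁻¹' A)) = Kγ y A := by
      intro y
      have hset : (Prod.mk y ⁻¹' ((Prod.fst ∘ Prod.snd : Ed × (Ed × Ed) → Ed) ⁻¹' A))
          = A ×ˢ (Set.univ : Set Ed) := by
        ext b
        simp [Set.mem_prod]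
      rw [hset, hKdef, Kernel.prod_apply, Measure.prod_prod, measure_univ, mul_one]
    simp_rw [hfib]
    have hσA : σ A = (ν ⊗ₘ Kγ) (Prod.snd ⁻¹' A) := by
      rw [hγs, ← hγssnd, Measure.snd_apply hA]
    rw [hσA, Measure.compProd_apply (measurable_snd hA)]
    rfl
  have hπtsnd : πt.map Prod.snd = μ := by
    rw [hπtdef, Measure.map_map measurable_snd measurable_snd]
    ext B hB
    rw [Measure.map_apply (measurable_snd.comp measurable_snd) hB, hm2def,
      Measure.compProd_apply ((measurable_snd.comp measurable_snd) hB)]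
    have hfib : ∀ y, K y (Prod.mk y ⁻¹' ((Prod.snd ∘ Prod.snd : Ed × (Ed × Ed) → Ed) ⁻¹' B)) = Kl y B := by
      intro y
      have hset : (Prod.mk y ⁻¹' ((Prod.snd ∘ Prod.snd : Ed × (Ed × Ed) → Ed) ⁻¹' B))
          = (Set.univ : Set Ed) ×ˢ B := by
        ext b
        simp [Set.mem_prod]
      rw [hset, hKdef, Kernel.prod_apply, Measure.prod_prod, measure_univ, one_mul]
    simp_rw [hfib]
    have hμB : μ B = (ν ⊗ₘ Kl) (Prod.snd ⁻¹' B) := by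
      rw [hlm, ← hlmsnd, Measure.snd_apply hB]
    rw [hμB, Measure.compProd_apply (measurable_snd hB)]
    rfl
  -- cost integrand of πt
  have hIπt : Integrable (fun p : Ed × Ed => ⟪p.1, p.2⟫) πt :=
    integrable_inner_of_sq measurable_fst measurable_snd
      ((lint_fst_eq hπtfst) ▸ hσ2') ((lint_snd_eq hπtsnd) ▸ hμ2')
  have hIm2 : Integrable (fun q : Ed × (Ed × Ed) => ⟪q.2.1, q.2.2⟫) m2 := by
    have h := (integrable_map_measure
      (measurable_fst.inner measurable_snd).aestronglyMeasurable
      measurable_snd.aemeasurable).mp hIπt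
    exact h
  have hrept : ∫ p : Ed × Ed, ⟪p.1, p.2⟫ ∂πt = ∫ q : Ed × (Ed × Ed), ⟪q.2.1, q.2.2⟫ ∂m2 := by
    rw [hπtdef]
    exact integral_map measurable_snd.aemeasurable
      (measurable_fst.inner measurable_snd).aestronglyMeasurable
  have hrept2 : ∫ q : Ed × (Ed × Ed), ⟪q.2.1, q.2.2⟫ ∂m2
      = ∫ y, ∫ b : Ed × Ed, ⟪b.1, b.2⟫ ∂(K y) ∂ν := by
    rw [hm2def] at hIm2 ⊢
    exact Measure.integral_compProd hIm2
  have hrept3 : ∫ y, ∫ b : Ed × Ed, ⟪b.1, b.2⟫ ∂(K y) ∂ν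
      = ∫ y, ⟪w y, ∫ x, x ∂(Kl y)⟫ ∂ν := by
    refine integral_congr_ae ?_
    filter_upwards [hKγ2, hKl2, hKγint, hKlint] with y h2γ h2l hintγ hintl
    rw [hKdef, Kernel.prod_apply]
    have hprod1 : ∫⁻ b : Ed × Ed, ENNReal.ofReal (‖b.1‖^2) ∂((Kγ y).prod (Kl y)) ≠ ∞ := by
      rw [lintegral_prod _ ((measurable_fst.norm.pow_const 2).ennreal_ofReal).aemeasurable]
      simp only [lintegral_const, measure_univ, mul_one]
      exact h2γ
    have hprod2 : ∫⁻ b : Ed × Ed, ENNReal.ofReal (‖b.2‖^2) ∂((Kγ y).prod (Kl y)) ≠ ∞ := by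
      rw [lintegral_prod _ ((measurable_snd.norm.pow_const 2).ennreal_ofReal).aemeasurable]
      simp only [lintegral_const, measure_univ, mul_one]
      exact h2l
    have hint : Integrable (fun b : Ed × Ed => ⟪b.1, b.2⟫) ((Kγ y).prod (Kl y)) :=
      integrable_inner_of_sq measurable_fst measurable_snd hprod1 hprod2
    rw [integral_prod _ hint]
    have e1 : ∀ s : Ed, ∫ x, ⟪s, x⟫ ∂(Kl y) = ⟪s, ∫ x, x ∂(Kl y)⟫ := fun s =>
      integral_inner hintl s
    simp_rw [e1]
    have h1 : ∫ s, ⟪s, ∫ x, x ∂(Kl y)⟫ ∂(Kγ y)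
        = ∫ s, ⟪(∫ x, x ∂(Kl y)), s⟫ ∂(Kγ y) := by simp_rw [real_inner_comm]
    rw [h1, integral_inner hintγ, real_inner_comm]
  -- the chain: cost integrand of πt equals that of γ
  have hchain : ∫ p : Ed × Ed, ⟪p.1, p.2⟫ ∂πt = ∫ p : Ed × Ed, ⟪p.1, p.2⟫ ∂γ := by
    rw [hrept, hrept2, hrept3, ← hbl2, ← hbl1, htrans1, hkey2, ← htrans2, hγtrans, hγrep,
      hγrep2]
  -- optimality of π gives the comparison
  obtain ⟨eπ, _, eπ3⟩ := qCost_repr (ρ := π) (hπ1 ▸ hσ2') (hπ2 ▸ hμ2')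
  obtain ⟨eπt, eπt0, eπt3⟩ := qCost_repr (ρ := πt)
    ((lint_fst_eq hπtfst) ▸ hσ2') ((lint_snd_eq hπtsnd) ▸ hμ2')
  have hopt := hπopt πt ⟨hπtfst, hπtsnd⟩
  rw [eπ, eπt, ENNReal.ofReal_le_ofReal_iff eπt0] at hopt
  rw [eπ3, eπt3, hπ1, hπ2, lint_fst_eq hπtfst, lint_snd_eq hπtsnd] at hopt
  -- conclude
  obtain ⟨eg, _, eg3⟩ := qCost_repr (ρ := σ.map (fun s => (s, T s)))
    ((lint_fst_eq hπgfst) ▸ hσ2') ((lint_snd_eq hπgsnd) ▸ hν2')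
  obtain ⟨eγ, _, eγ3⟩ := qCost_repr (ρ := γ)
    ((lint_fst_eq hγfst) ▸ hσ2') ((lint_snd_eq hγsnd) ▸ hν2')
  rw [eg, eγ]
  refine ENNReal.ofReal_le_ofReal ?_
  rw [eg3, eγ3, lint_fst_eq hπgfst, lint_snd_eq hπgsnd, lint_fst_eq hγfst, lint_snd_eq hγsnd,
    hIg]
  have hfinal : ∫ p : Ed × Ed, ⟪p.1, p.2⟫ ∂γ ≤ ∫ s, ⟪s, T s⟫ ∂σ := by
    rw [← hchain, ← hkey1]
    linarith
  linarith
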